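/- Let K=K(c) be a symmetric A_{2n-1}-crystal with symmetric extract B, and let v be a self-complementary vertex. Then: (a) for every color i of K, h_i(v)=h_{i'}(v) and t_i(v)=t_{i'}(v); (b) for each i in {1,...,n}, every connected subgraph of (S,E_{ibar}) is a finite directed path, the maximal ibar-colored path of B beginning at v has exactly h_i(v) edges, and the maximal ibar-colored path of B ending at v has exactly t_i(v) edges. -/

import Mathlib

open Classical

noncomputable section

/-- Iterate a partial operator `k` times. -/
def optIter {V : Type} (f : V → Option V) : ℕ → V → Option V
  | 0, v => some v
  | k + 1, v => (f v).bind (optIter f k)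

/-- A vertex type together with, for every natural number (color) `i`,
a partial operator whose graph is the set of `i`-edges. -/
structure PreGraph where
  V : Type
  F : ℕ → V → Option V

namespace PreGraph

/-- Partial inverse operator of color `i`. -/
def Finv (K : PreGraph) (i : ℕ) (v : K.V) : Option K.V :=
  if h : ∃ u, K.F i u = some v then some h.choose else none

/-- Number of edges of the maximal `i`-colored path beginning at `v`. -/
def h (K : PreGraph) (i : ℕ) (v : K.V) : ℕ :=
  sSup {k | (optIter (K.F i) k v).isSome = true}

/-- Number of edges of the maximal `i`-colored path ending at `v`. -/
def t (K : PreGraph) (i : ℕ) (v : K.V) : ℕ :=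
  sSup {k | ∃ u, optIter (K.F i) k u = some v}

/-- One (undirected) step along an edge of any color. -/
def Step (K : PreGraph) (u v : K.V) : Prop :=
  ∃ i, K.F i u = some v ∨ K.F i v = some u

/-- Weak connectivity. -/
def Connected (K : PreGraph) : Prop :=
  ∀ u v : K.V, Relation.ReflTransGen K.Step u v

/-- All edges have colors in `C`. -/
def ColorsIn (K : PreGraph) (C : Set ℕ) : Prop :=
  ∀ i ∉ C, ∀ v, K.F i v = none

end PreGraph

/-- `s` has no incoming edges. -/
def IsSource (K : PreGraph) (s : K.V) : Prop := ∀ i u, K.F i u ≠ some s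

/-- `tv` has no outgoing edges. -/
def IsSink (K : PreGraph) (tv : K.V) : Prop := ∀ i, K.F i tv = none

/-- `K` is a (finite) colored graph with colors in `C` satisfying axiom (A1):
every connected monochromatic subgraph is a finite directed path. -/
def IsColored (K : PreGraph) (C : Set ℕ) : Prop :=
  Finite K.V ∧ K.ColorsIn C ∧
  (∀ (i : ℕ) (u u' v : K.V), K.F i u = some v → K.F i u' = some v → u = u') ∧
  (∀ (i : ℕ) (v : K.V) (k : ℕ), 0 < k → optIter (K.F i) k v ≠ some v)

/-- `|i - j| = 1`. -/
def Neighb (i j : ℕ) : Prop := i + 1 = j ∨ j + 1 = i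

/-- `|i - j| ≥ 2`. -/
def Far (i j : ℕ) : Prop := i + 2 ≤ j ∨ j + 2 ≤ i

instance (i j : ℕ) : Decidable (Neighb i j) := by unfold Neighb; infer_instance
instance (i j : ℕ) : Decidable (Far i j) := by unfold Far; infer_instance

/-- Axiom (A2) for the ordered pair of distinct colors `(i, j)`. -/
def A2at (K : PreGraph) (i j : ℕ) : Prop :=
  (∀ u v, K.F i u = some v →
    K.t j v ≤ K.t j u ∧ K.h j u ≤ K.h j v ∧
    ((K.h j u : ℤ) - (K.t j u : ℤ)) - ((K.h j v : ℤ) - (K.t j v : ℤ)) =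
      (if Neighb i j then (-1 : ℤ) else 0)) ∧
  (∀ u v w, K.F i u = some v → K.F i v = some w →
    2 * K.h j v ≤ K.h j u + K.h j w)

/-- Axiom (A3) for neighboring colors `i, j`. -/
def A3at (K : PreGraph) (i j : ℕ) : Prop :=
  (∀ u v v', K.F i u = some v → K.F j u = some v' →
    K.h j v = K.h j u →
    ((K.h i v' : ℤ) - (K.h i u : ℤ) = 1 ∧ ∃ w, K.F j v = some w ∧ K.F i v' = some w)) ∧
  (∀ u u' v, K.F i u = some v → K.F j u' = some v →
    (K.h j v : ℤ) - (K.h j u : ℤ) = 1 →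
    (K.h i v = K.h i u' ∧ ∃ w, K.F j w = some u ∧ K.F i w = some u'))

/-- Axiom (A4) (Verma relations) for neighboring colors `i, j`. -/
def A4at (K : PreGraph) (i j : ℕ) : Prop :=
  (∀ u v v', K.F i u = some v → K.F j u = some v' →
    (K.h j v : ℤ) - (K.h j u : ℤ) = 1 → (K.h i v' : ℤ) - (K.h i u : ℤ) = 1 →
    ∃ w, (((K.F i u).bind (K.F j)).bind (K.F j)).bind (K.F i) = some w ∧
         (((K.F j u).bind (K.F i)).bind (K.F i)).bind (K.F j) = some w) ∧
  (∀ u u' v, K.F i u = some v → K.F j u' = some v →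
    K.h j v = K.h j u → K.h i v = K.h i u' →
    ∃ w, (((K.Finv i v).bind (K.Finv j)).bind (K.Finv j)).bind (K.Finv i) = some w ∧
         (((K.Finv j v).bind (K.Finv i)).bind (K.Finv i)).bind (K.Finv j) = some w)

/-- Axiom (A5) for colors `i, j` at distance at least 2. -/
def A5at (K : PreGraph) (i j : ℕ) : Prop :=
  ∀ Fi ∈ ({K.F i, K.Finv i} : Set (K.V → Option K.V)),
  ∀ Fj ∈ ({K.F j, K.Finv j} : Set (K.V → Option K.V)),
  ∀ v, (Fi v).isSome → (Fj v).isSome →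
    ∃ w, (Fi v).bind Fj = some w ∧ (Fj v).bind Fi = some w

/-- `K` is a regular crystal of type A on the color set `C`
(an `A_{|C|}`-crystal when `C` is an integer interval). -/
def IsCrystalOn (K : PreGraph) (C : Set ℕ) : Prop :=
  IsColored K C ∧ K.Connected ∧
  (∀ i ∈ C, ∀ j ∈ C, i ≠ j → A2at K i j) ∧
  (∀ i ∈ C, ∀ j ∈ C, Neighb i j → A3at K i j ∧ A4at K i j) ∧
  (∀ i ∈ C, ∀ j ∈ C, Far i j → A5at K i j)

/-- `K` is an `A_n`-crystal (colors `1, …, n`). -/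
def IsACrystal (n : ℕ) (K : PreGraph) : Prop := IsCrystalOn K (Set.Icc 1 n)

/-- Apply a list of operators, head first. -/
def applyStr (K : PreGraph) : List ℕ → K.V → Option K.V
  | [], v => some v
  | i :: L, v => (K.F i v).bind (applyStr K L)

/-- The string `w_{m,k,j} = F_{o+j} F_{o+j+1} ⋯ F_{o+j+k-1}` (rightmost applied
first, i.e. head of the list applied first) for a crystal with colors `o+1, …, o+m`. -/
def wStr (o k j : ℕ) : List ℕ := (List.range k).map (fun m => o + j + k - 1 - m)

/-- The string `S_{m,k} = w_{m,k,m-k+1} ⋯ w_{m,k,2} w_{m,k,1}` for a crystal with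
colors `o+1, …, o+m`. -/
def SStr (o m k : ℕ) : List ℕ :=
  (List.range (m - k + 1)).flatMap fun jm => wStr o k (jm + 1)

/-- The string `S_{m,m}^{a_{o+m}} ⋯ S_{m,1}^{a_{o+1}}` for a crystal with colors
`o+1, …, o+m`, defining the principal vertex with coordinates `a`. -/
def prinStr (o m : ℕ) (a : ℕ → ℕ) : List ℕ :=
  (List.range m).flatMap fun km => (List.replicate (a (o + km + 1)) (SStr o m (km + 1))).flatten

def prinOpt (K : PreGraph) (o m : ℕ) (s : K.V) (a : ℕ → ℕ) : Option K.V :=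
  applyStr K (prinStr o m a) s

/-- `p` is the principal vertex with coordinates `a` of the crystal `K` with colors
`o+1, …, o+m` and source `s`. -/
def IsPrin (K : PreGraph) (o m : ℕ) (s : K.V) (a : ℕ → ℕ) (p : K.V) : Prop :=
  prinOpt K o m s a = some p

/-- The principal lattice of an `A_n`-crystal with source `s` and parameter `c`. -/
def PrinLat (K : PreGraph) (n : ℕ) (s : K.V) (c : ℕ → ℕ) : Set K.V :=
  {p | ∃ a : ℕ → ℕ, (∀ i, 1 ≤ i → i ≤ n → a i ≤ c i) ∧ IsPrin K 0 n s a p}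

/-- One undirected step along an edge with color in `I`. -/
def stepOn (K : PreGraph) (I : Set ℕ) (u v : K.V) : Prop :=
  ∃ i ∈ I, K.F i u = some v ∨ K.F i v = some u

/-- `u` lies in the same `I`-colored component as `v`. -/
def inComp (K : PreGraph) (I : Set ℕ) (v u : K.V) : Prop :=
  Relation.ReflTransGen (stepOn K I) v u

/-- The subcrystal of `K` with color set `I` containing `v` (the maximal connected
subgraph through `v` using only colors in `I`). -/
def PreGraph.sub (K : PreGraph) (I : Set ℕ) (v : K.V) : PreGraph where
  V := {u : K.V // inComp K I v u}
  F := fun i u =>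
    if hi : i ∈ I then
      (K.F i u.1).pbind fun w hw =>
        some ⟨w, Relation.ReflTransGen.tail u.2 ⟨i, hi, Or.inl (Option.mem_def.mp hw)⟩⟩
    else none

/-- Directed reachability. -/
def dirReach (K : PreGraph) (u v : K.V) : Prop :=
  Relation.ReflTransGen (fun a b => ∃ i, K.F i a = some b) u v

/-- The interval of `K` from `p` to `q`: the subgraph formed by all vertices and
edges lying on directed paths from `p` to `q`. -/
def PreGraph.interval (K : PreGraph) (p q : K.V) : PreGraph where
  V := {w : K.V // dirReach K p w ∧ dirReach K w q}
  F := fun i u =>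
    (K.F i u.1).pbind fun w _ =>
      if hw : dirReach K p w ∧ dirReach K w q then some ⟨w, hw⟩ else none

/-- The symmetric extract: restriction to self-complementary vertices,
with `ibar`-edges given by `chain i`. -/
def extract (K : PreGraph) (chain : ℕ → K.V → Option K.V) (σ : K.V → K.V) : PreGraph where
  V := {v : K.V // σ v = v}
  F := fun i u =>
    (chain i u.1).pbind fun w _ => if hw : σ w = w then some ⟨w, hw⟩ else none

/-- The operator chain for the color `ibar` of the symmetric extract of a
symmetric `A_{2n-1}`-crystal. -/
def chainB (K : PreGraph) (n : ℕ) (i : ℕ) (u : K.V) : Option K.V :=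
  if 1 ≤ i ∧ i ≤ n then
    (if i = n then K.F n u else (K.F i u).bind (K.F (2 * n - i)))
  else none

/-- The operator chain for the color `ibar` of the symmetric extract of a
symmetric `A_{2n}`-crystal. -/
def chainC (K : PreGraph) (n : ℕ) (i : ℕ) (u : K.V) : Option K.V :=
  if 1 ≤ i ∧ i ≤ n then
    (if i = n then (((K.F n u).bind (K.F (n + 1))).bind (K.F (n + 1))).bind (K.F n)
     else (K.F i u).bind (K.F (2 * n + 1 - i)))
  else none

/-- Symmetric extract from a symmetric `A_{2n-1}`-crystal. -/
def extractB (K : PreGraph) (n : ℕ) (σ : K.V → K.V) : PreGraph := extract K (chainB K n) σ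

/-- Symmetric extract from a symmetric `A_{2n}`-crystal. -/
def extractC (K : PreGraph) (n : ℕ) (σ : K.V → K.V) : PreGraph := extract K (chainC K n) σ

/-- Admissibility of a six-tuple `(x', y, x''; y', x, y'')` in the worm model. -/
def WormOK (g1 g2 : ℕ) : ℤ × ℤ × ℤ × ℤ × ℤ × ℤ → Prop
  | (x', y, x'', y', x, y'') =>
    (0 ≤ x' ∧ x' ≤ 2 * (g1 : ℤ)) ∧ (0 ≤ x'' ∧ x'' ≤ 2 * (g1 : ℤ)) ∧
    (0 ≤ x ∧ x ≤ 2 * (g1 : ℤ)) ∧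
    (0 ≤ y' ∧ y' ≤ (g2 : ℤ)) ∧ (0 ≤ y'' ∧ y'' ≤ (g2 : ℤ)) ∧ (0 ≤ y ∧ y ≤ (g2 : ℤ)) ∧
    (2 ∣ x') ∧ (2 ∣ x'') ∧ (y' ≤ y ∧ y ≤ y'') ∧ (x' ≤ x ∧ x ≤ x'') ∧
    (y' < y → x' = x) ∧ (y < y'' → x = x'')

/-- The candidate image of a worm under the operator `1tilde`. -/
def worm1 : ℤ × ℤ × ℤ × ℤ × ℤ × ℤ → ℤ × ℤ × ℤ × ℤ × ℤ × ℤ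
  | (x', y, x'', y', x, y'') =>
    if 2 * x > x' + x'' then (x' + 2, y, x'', y', x, y'')
    else if x = x' ∧ x' = x'' ∧ y < y'' then (x', y + 1, x'', y', x, y'')
    else (x', y, x'' + 2, y', x, y'')

/-- The candidate image of a worm under the operator `2tilde`. -/
def worm2 : ℤ × ℤ × ℤ × ℤ × ℤ × ℤ → ℤ × ℤ × ℤ × ℤ × ℤ × ℤ
  | (x', y, x'', y', x, y'') =>
    if 2 * y > y' + y'' then (x', y, x'', y' + 1, x, y'')
    else if y' = y ∧ y = y'' ∧ x < x'' then (x', y, x'', y', x + 1, y'')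
    else (x', y, x'', y', x, y'' + 1)

/-- The worm graph `W(g1, g2)`, with colors `1 = 1tilde` and `2 = 2tilde`. -/
def WormGraph (g1 g2 : ℕ) : PreGraph where
  V := {w : ℤ × ℤ × ℤ × ℤ × ℤ × ℤ // WormOK g1 g2 w}
  F := fun i u =>
    if i = 1 then
      (if h1 : WormOK g1 g2 (worm1 u.1) then some ⟨worm1 u.1, h1⟩ else none)
    else if i = 2 then
      (if h2 : WormOK g1 g2 (worm2 u.1) then some ⟨worm2 u.1, h2⟩ else none)
    else none

/-- Isomorphism of colored graphs, renaming colors via `φ`. -/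
def IsoVia (K L : PreGraph) (φ : ℕ → ℕ) : Prop :=
  ∃ e : K.V ≃ L.V, ∀ i u v, K.F i u = some v ↔ L.F (φ i) (e u) = some (e v)

/-- The Cartesian product of an `i`-path of length `p` and a `j`-path of length `q`. -/
def boxGraph (i j p q : ℕ) : PreGraph where
  V := Fin (p + 1) × Fin (q + 1)
  F := fun s u =>
    if s = i then
      (if h : (u.1 : ℕ) < p then some (⟨(u.1 : ℕ) + 1, by omega⟩, u.2) else none)
    else if s = j then
      (if h : (u.2 : ℕ) < q then some (u.1, ⟨(u.2 : ℕ) + 1, by omega⟩) else none)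
    else none

/-- `B_n`-crystal: components with colors `n-1, n` are worm graphs,
with color `n-1` corresponding to `1tilde` and `n` to `2tilde`. -/
def IsBCrystal (n : ℕ) (B : PreGraph) : Prop :=
  IsColored B (Set.Icc 1 n) ∧ B.Connected ∧
  (∀ i ∈ Set.Icc 1 n, ∀ j ∈ Set.Icc 1 n, Far i j → A5at B i j) ∧
  (∀ i j, 1 ≤ i → i < n → 1 ≤ j → j < n → Neighb i j →
    ∀ v : B.V, IsCrystalOn (B.sub {i, j} v) {i, j}) ∧
  (∀ v : B.V, ∃ g1 g2 : ℕ,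
    IsoVia (B.sub ({n - 1, n} : Set ℕ) v) (WormGraph g1 g2)
      (fun x => if x = n - 1 then 1 else if x = n then 2 else 0))

/-- `C_n`-crystal: components with colors `n-1, n` are worm graphs,
with color `n-1` corresponding to `2tilde` and `n` to `1tilde`. -/
def IsCCrystal (n : ℕ) (B : PreGraph) : Prop :=
  IsColored B (Set.Icc 1 n) ∧ B.Connected ∧
  (∀ i ∈ Set.Icc 1 n, ∀ j ∈ Set.Icc 1 n, Far i j → A5at B i j) ∧
  (∀ i j, 1 ≤ i → i < n → 1 ≤ j → j < n → Neighb i j →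
    ∀ v : B.V, IsCrystalOn (B.sub {i, j} v) {i, j}) ∧
  (∀ v : B.V, ∃ g1 g2 : ℕ,
    IsoVia (B.sub ({n - 1, n} : Set ℕ) v) (WormGraph g1 g2)
      (fun x => if x = n - 1 then 2 else if x = n then 1 else 0))

/-! ### The crossing model -/

/-- `(k, i, j)` is a node `v_i^k(j)` of the supporting graph `G` for rank `n`. -/
def isNode (n k i j : ℕ) : Prop :=
  1 ≤ j ∧ j ≤ i ∧ i ≤ n ∧ i - j + 1 ≤ k ∧ k ≤ n - j + 1

instance (n k i j : ℕ) : Decidable (isNode n k i j) := by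
  unfold isNode; infer_instance

/-- Extension of a function on the nodes of `G` to the extended supporting graph:
extra nodes from which `G^k` is reachable get value `c k`, the others get `0`. -/
def fext (n : ℕ) (c : ℕ → ℕ) (f : ℕ × ℕ × ℕ → ℤ) (k i j : ℕ) : ℤ :=
  if isNode n k i j then f (k, i, j)
  else if j ≤ n - k + 1 then (c k : ℤ) else 0

/-- The slack at the node `v_i^k(j)`. -/
def epsN (n : ℕ) (c : ℕ → ℕ) (f : ℕ × ℕ × ℕ → ℤ) (k i j : ℕ) : ℤ :=
  (fext n c f k (i - 1) (j - 1) - fext n c f k i j) -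
    (fext n c f k i (j - 1) - fext n c f k (i + 1) j)

/-- The total slack at the multinode `V_i(j)`. -/
def epsTot (n : ℕ) (c : ℕ → ℕ) (f : ℕ × ℕ × ℕ → ℤ) (i j : ℕ) : ℤ :=
  ∑ k ∈ Finset.Icc (i - j + 1) (n - j + 1), epsN n c f k i j

/-- The reduced slack at the multinode `V_i(j)`. -/
def teps (n : ℕ) (c : ℕ → ℕ) (f : ℕ × ℕ × ℕ → ℤ) (i j : ℕ) : ℤ :=
  if hj : (Finset.Icc 1 j).Nonempty then
    max 0 ((Finset.Icc 1 j).inf' hj fun p => ∑ q ∈ Finset.Icc p j, epsTot n c f i q)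
  else 0

/-- `k0` satisfies the switch condition in the multinode `V_i(j)`. -/
def switchCond (n : ℕ) (f : ℕ × ℕ × ℕ → ℤ) (i j k0 : ℕ) : Prop :=
  i - j + 1 ≤ k0 ∧ k0 ≤ n - j + 1 ∧
  (∀ k, i - j + 1 ≤ k → k < k0 → isNode n k (i + 1) (j + 1) →
    f (k, i, j) = f (k, i + 1, j + 1)) ∧
  (∀ k, k0 < k → k ≤ n - j + 1 → isNode n k (i + 1) j →
    f (k, i + 1, j) = f (k, i, j))

/-- The switch-node (first node with the switch property) of the multinode `V_i(j)`. -/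
def switchNode (n : ℕ) (f : ℕ × ℕ × ℕ → ℤ) (i j : ℕ) : ℕ :=
  sInf {k0 | switchCond n f i j k0}

/-- Feasible functions of the crossing model (normalized to vanish off the nodes). -/
def Feasible (n : ℕ) (c : ℕ → ℕ) (f : ℕ × ℕ × ℕ → ℤ) : Prop :=
  (∀ k i j, ¬ isNode n k i j → f (k, i, j) = 0) ∧
  (∀ k i j, isNode n k i j → isNode n k (i - 1) j → f (k, i - 1, j) ≤ f (k, i, j)) ∧
  (∀ k i j, isNode n k i j → isNode n k (i + 1) (j + 1) → f (k, i + 1, j + 1) ≤ f (k, i, j)) ∧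
  (∀ k i j, isNode n k i j → 0 ≤ f (k, i, j) ∧ f (k, i, j) ≤ (c k : ℤ)) ∧
  (∀ i j, 1 ≤ j → j ≤ i → i ≤ n → ∃ k0, switchCond n f i j k0)

/-- Increase `f` by one at the node `(k, i, j)`. -/
def bump (f : ℕ × ℕ × ℕ → ℤ) (k i j : ℕ) : ℕ × ℕ × ℕ → ℤ :=
  fun x => if x = (k, i, j) then f x + 1 else f x

/-- The crossing-model graph `Kscr(c)`: vertices are the feasible functions, and
the move `φ_i` increases `f` by one at the switch-node of the active multinode. -/
def Kscr (n : ℕ) (c : ℕ → ℕ) : PreGraph where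
  V := {f : ℕ × ℕ × ℕ → ℤ // Feasible n c f}
  F := fun i f =>
    if 1 ≤ i ∧ i ≤ n ∧ ∃ j, 1 ≤ j ∧ j ≤ i ∧ 0 < teps n c f.1 i j then
      (let j := sSup {j | 1 ≤ j ∧ j ≤ i ∧ 0 < teps n c f.1 i j}
       let g := bump f.1 (switchNode n f.1 i j) i j
       if hg : Feasible n c g then some ⟨g, hg⟩ else none)
    else none

/-- The function `f_{a,D}` of the crossing model. -/
def faD (n : ℕ) (a : ℕ → ℕ) (D : ℕ → ℤ) : ℕ × ℕ × ℕ → ℤ := fun x =>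
  if isNode n x.1 x.2.1 x.2.2 then
    (if x.2.1 - x.2.2 + 1 = x.1 then (a x.1 : ℤ) else (a x.1 : ℤ) + min (D (x.1 - 1)) 0) +
    (if x.2.2 ≤ n - x.1 then max (D x.1) 0 else 0)
  else 0

/-! ### Descriptions of self-complementary vertices -/

/-- `(a1, a2, δ, l)` is the description of a self-complementary vertex `v` of a
symmetric `A_3`-crystal `K` with source `s` and parameter `c`. -/
def IsDescB (K : PreGraph) (s : K.V) (c : ℕ → ℕ) (v : K.V) (q : ℕ × ℕ × ℤ × ℕ) : Prop :=
  q.2.2.2 = K.t 2 v ∧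
  ∃ (a : ℕ → ℕ) (pa : K.V),
    a 1 = q.1 ∧ a 2 = q.2.1 ∧ a 3 = ((q.1 : ℤ) + max q.2.2.1 0).toNat ∧
    (∀ i, 1 ≤ i → i ≤ 3 → a i ≤ c i) ∧
    IsPrin K 0 3 s a pa ∧ inComp K (Set.Icc 1 2) pa v ∧
    0 ≤ (q.2.1 : ℤ) + q.2.2.1 ∧ 0 ≤ (a 3 : ℤ) - q.2.2.1 ∧
    ∃ s' : (K.sub (Set.Icc 1 2) pa).V, IsSource (K.sub (Set.Icc 1 2) pa) s' ∧
    ∃ z : (K.sub (Set.Icc 1 2) pa).V,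
      IsPrin (K.sub (Set.Icc 1 2) pa) 0 2 s'
        (fun i => if i = 1 then ((q.2.1 : ℤ) + q.2.2.1).toNat else ((a 3 : ℤ) - q.2.2.1).toNat) z ∧
      inComp K ({2} : Set ℕ) z.1 v

/-- The polytope of descriptions for a symmetric `A_3`-crystal with parameter `(c1, c2, c1)`. -/
def QuadB (c1 c2 : ℕ) : Set (ℕ × ℕ × ℤ × ℕ) :=
  {q | q.1 ≤ c1 ∧ q.2.1 ≤ c2 ∧ -(q.2.1 : ℤ) ≤ q.2.2.1 ∧ (q.2.1 : ℤ) - (c2 : ℤ) ≤ q.2.2.1 ∧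
       q.2.2.1 ≤ (c1 : ℤ) - (q.1 : ℤ) ∧ (q.2.2.2 : ℤ) ≤ (c2 : ℤ) + 2 * q.2.2.1}

/-- The worm associated to the description `(a1, a2, δ, l)`. -/
def wtupleB (a1 a2 : ℕ) (δ : ℤ) (l : ℕ) : ℤ × ℤ × ℤ × ℤ × ℤ × ℤ :=
  let a3 : ℤ := (a1 : ℤ) + max δ 0
  let tr : ℤ × ℤ × ℤ :=
    if 0 ≤ δ then
      if (l : ℤ) ≤ (a2 : ℤ) then ((l : ℤ), 2 * (a1 : ℤ), (a2 : ℤ))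
      else if (l : ℤ) ≤ (a2 : ℤ) + 2 * δ then
        ((a2 : ℤ), 2 * (a1 : ℤ) + (l : ℤ) - (a2 : ℤ), (a2 : ℤ))
      else ((a2 : ℤ), 2 * a3, (l : ℤ) - 2 * δ)
    else
      if (l : ℤ) ≤ (a2 : ℤ) + δ then ((l : ℤ), 2 * (a1 : ℤ), (a2 : ℤ) - δ)
      else ((a2 : ℤ) + δ, 2 * (a1 : ℤ), (l : ℤ) - 2 * δ)
  (2 * (a1 : ℤ), (a2 : ℤ), 2 * a3, tr.1, tr.2.1, tr.2.2)

def wtQ (q : ℕ × ℕ × ℤ × ℕ) : ℤ × ℤ × ℤ × ℤ × ℤ × ℤ :=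
  wtupleB q.1 q.2.1 q.2.2.1 q.2.2.2

/-- The string `(F_2 F_3)^r (F_3 F_2)^r` (rightmost applied first). -/
def diagStr (r : ℕ) : List ℕ :=
  (List.replicate r ([2, 3] : List ℕ)).flatten ++ (List.replicate r ([3, 2] : List ℕ)).flatten

/-- `(a1, a2, δ, ρ)` is the description of a self-complementary vertex `v` of a
symmetric `A_4`-crystal `K` with source `s` and parameter `c`. -/
def IsDescC (K : PreGraph) (s : K.V) (c : ℕ → ℕ) (v : K.V) (q : ℕ × ℕ × ℤ × ℕ) : Prop :=
  ∃ (a : ℕ → ℕ) (pa : K.V),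
    a 1 = q.1 ∧ a 2 = q.2.1 ∧ a 3 = ((q.2.1 : ℤ) + min q.2.2.1 0).toNat ∧
    a 4 = ((q.1 : ℤ) + max q.2.2.1 0).toNat ∧
    (∀ i, 1 ≤ i → i ≤ 4 → a i ≤ c i) ∧
    IsPrin K 0 4 s a pa ∧ inComp K (Set.Icc 1 3) pa v ∧
    0 ≤ (q.2.1 : ℤ) + q.2.2.1 ∧ 0 ≤ (a 4 : ℤ) - q.2.2.1 ∧
    (∃ s' : (K.sub (Set.Icc 1 3) pa).V, IsSource (K.sub (Set.Icc 1 3) pa) s' ∧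
     ∃ z : (K.sub (Set.Icc 1 3) pa).V,
       IsPrin (K.sub (Set.Icc 1 3) pa) 0 3 s'
         (fun i => if i = 1 then ((q.2.1 : ℤ) + q.2.2.1).toNat
                   else if i = 2 then a 3 else ((a 4 : ℤ) - q.2.2.1).toNat) z ∧
       inComp K (Set.Icc 2 3) z.1 v) ∧
    (∃ stil : (K.sub (Set.Icc 2 3) v).V, IsSource (K.sub (Set.Icc 2 3) v) stil ∧
       applyStr (K.sub (Set.Icc 2 3) v) (diagStr q.2.2.2) stil =
         some ⟨v, Relation.ReflTransGen.refl⟩)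

/-- The polytope of descriptions for a symmetric `A_4`-crystal with parameter
`(c1, c2, c2, c1)`. -/
def QuadC (c1 c2 : ℕ) : Set (ℕ × ℕ × ℤ × ℕ) :=
  {q | q.1 ≤ c1 ∧ q.2.1 ≤ c2 ∧ -(q.2.1 : ℤ) ≤ q.2.2.1 ∧
       q.2.2.1 ≤ (c1 : ℤ) - (q.1 : ℤ) ∧ (q.2.2.2 : ℤ) ≤ (c2 : ℤ) + q.2.2.1}

end

/-!
Part (a): `σ` carries `i`-paths to `i'`-paths and back, and fixes `v`.

Part (b): along an `ibar`-edge `h_i` drops and `t_i` grows by exactly one. Conversely, at a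
self-complementary `u` with `h_i(u) ≥ 1` both `F_i u` and `F_{i'} u = σ (F_i u)` exist, so by
(A5) `F_i` and `F_{i'}` commute at `u`, and `σ` exchanges the two sides of
`F_{i'} F_i u = F_i F_{i'} u`; hence this vertex is self-complementary and an `ibar`-edge leaves
`u`. Dually an `ibar`-edge enters every self-complementary `w` with `t_i(w) ≥ 1`. So `h_i` and
`t_i` are potentials for `F_ibar` which determine the lengths of its maximal paths and exclude
cycles.
-/

section optIter

variable {V : Type} {f g : V → Option V}

theorem optIter_one (v : V) : optIter f 1 v = f v := by
  cases h : f v <;> simp [optIter, h]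

theorem optIter_add (a b : ℕ) (v : V) :
    optIter f (a + b) v = (optIter f a v).bind (optIter f b) := by
  induction a generalizing v with
  | zero => simp [optIter]
  | succ a ih =>
    rw [Nat.succ_add]
    cases h : f v <;> simp [optIter, h, ih]

theorem optIter_succ_eq_bind (k : ℕ) (v : V) : optIter f (k + 1) v = (optIter f k v).bind f := by
  rw [optIter_add, funext (optIter_one (f := f))]

theorem isSome_optIter_of_le {k m : ℕ} (hkm : k ≤ m) {v : V}
    (hm : (optIter f m v).isSome) : (optIter f k v).isSome := by
  obtain ⟨d, rfl⟩ := Nat.exists_eq_add_of_le hkm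
  rw [optIter_add] at hm
  cases h : optIter f k v <;> simp_all

theorem optIter_ne_of_lt (hcyc : ∀ v k, 0 < k → optIter f k v ≠ some v) {p q : ℕ} (hpq : p < q)
    {v x : V} (hp : optIter f p v = some x) : optIter f q v ≠ some x := by
  obtain ⟨d, rfl⟩ := Nat.exists_eq_add_of_lt hpq
  rw [add_assoc, optIter_add, hp, Option.bind_some]
  exact hcyc x _ (Nat.succ_pos d)

/-- Acyclicity makes the iterates of `v` pairwise distinct, so they inject into `V`. -/
theorem lt_card_of_isSome_optIter [Finite V] (hcyc : ∀ v k, 0 < k → optIter f k v ≠ some v)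
    {k : ℕ} {v : V} (h : (optIter f k v).isSome) : k < Nat.card V := by
  let orbit : Fin (k + 1) → V := fun m =>
    (optIter f m v).get (isSome_optIter_of_le (Nat.lt_succ_iff.mp m.2) h)
  have horbit : ∀ m : Fin (k + 1), optIter f m v = some (orbit m) :=
    fun m => (Option.some_get _).symm
  have hinj : Function.Injective orbit := by
    intro a b hab
    by_contra hne
    rcases lt_or_gt_of_ne (Fin.val_injective.ne hne) with hlt | hlt
    · exact optIter_ne_of_lt hcyc hlt (horbit a) (by rw [horbit b, hab])
    · exact optIter_ne_of_lt hcyc hlt (horbit b) (by rw [horbit a, hab])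
  simpa using Nat.card_le_card_of_injective orbit hinj

theorem optIter_potential (φ : V → ℤ) (d : ℤ) (hφ : ∀ u w, f u = some w → φ w = φ u + d)
    {k : ℕ} {u y : V} (h : optIter f k u = some y) : φ y = φ u + k * d := by
  induction k generalizing u with
  | zero => simp_all [optIter]
  | succ k ih =>
    rw [optIter, Option.bind_eq_some_iff] at h
    obtain ⟨w, hw, hy⟩ := h
    rw [ih hy, hφ u w hw]
    push_cast
    ring

theorem optIter_conj {σ : V → V} (hσ : ∀ u w, f u = some w → g (σ u) = some (σ w))
    {k : ℕ} {u w : V} (h : optIter f k u = some w) : optIter g k (σ u) = some (σ w) := by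
  induction k generalizing u with
  | zero => simp_all [optIter]
  | succ k ih =>
    rw [optIter, Option.bind_eq_some_iff] at h
    obtain ⟨x, hx, hw⟩ := h
    rw [optIter, hσ u x hx, Option.bind_some, ih hw]

end optIter

theorem Nat.le_sSup_iff_mem_of_isLowerSet {S : Set ℕ} (hne : S.Nonempty) (hb : BddAbove S)
    (hS : IsLowerSet S) {k : ℕ} : k ≤ sSup S ↔ k ∈ S :=
  ⟨fun hk => hS hk (Nat.sSup_mem hne hb), fun hk => le_csSup hb hk⟩

namespace PreGraph

variable {G : PreGraph} {i : ℕ}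

theorem Finv_eq_some_iff (hinj : ∀ u u' w, G.F i u = some w → G.F i u' = some w → u = u')
    {u w : G.V} : G.Finv i w = some u ↔ G.F i u = some w := by
  unfold Finv
  split_ifs with hex
  · exact ⟨fun h => Option.some_inj.mp h ▸ hex.choose_spec,
      fun h => congrArg some (hinj _ _ _ hex.choose_spec h)⟩
  · exact iff_of_false (by simp) fun h => hex ⟨u, h⟩

section Potential

theorem h_eq_of_potential (φ : G.V → ℕ) (hφ : ∀ u w, G.F i u = some w → φ u = φ w + 1)
    (hdef : ∀ u, 1 ≤ φ u → (G.F i u).isSome) (u : G.V) : G.h i u = φ u := by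
  suffices hset : {k | (optIter (G.F i) k u).isSome = true} = Set.Iic (φ u) by
    rw [PreGraph.h, hset, csSup_Iic]
  ext k
  constructor
  · intro hk
    obtain ⟨y, hy⟩ := Option.isSome_iff_exists.mp hk
    have := optIter_potential (fun x => (φ x : ℤ)) (-1)
      (fun u w h => by have := hφ u w h; omega) hy
    simp only [Set.mem_Iic]
    omega
  · induction k generalizing u with
    | zero => simp [optIter]
    | succ k ih =>
      intro hk
      obtain ⟨w, hw⟩ := Option.isSome_iff_exists.mp (hdef u (by simp at hk; omega))
      have := hφ u w hw
      simpa [optIter, hw] using ih w (by simp at hk ⊢; omega)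

theorem t_eq_of_potential (ψ : G.V → ℕ) (hψ : ∀ u w, G.F i u = some w → ψ w = ψ u + 1)
    (hdef : ∀ w, 1 ≤ ψ w → ∃ u, G.F i u = some w) (w : G.V) : G.t i w = ψ w := by
  suffices hset : {k | ∃ u, optIter (G.F i) k u = some w} = Set.Iic (ψ w) by
    rw [PreGraph.t, hset, csSup_Iic]
  ext k
  constructor
  · rintro ⟨u, hu⟩
    have := optIter_potential (fun x => (ψ x : ℤ)) 1
      (fun u w h => by have := hψ u w h; omega) hu
    simp only [Set.mem_Iic]
    omega
  · induction k generalizing w with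
    | zero => exact fun _ => ⟨w, rfl⟩
    | succ k ih =>
      intro hk
      obtain ⟨u, hu⟩ := hdef w (by simp at hk; omega)
      have := hψ u w hu
      obtain ⟨x, hx⟩ := ih u (by simp at hk ⊢; omega)
      exact ⟨x, by rw [optIter_succ_eq_bind, hx, Option.bind_some, hu]⟩

end Potential

section FiniteAcyclic

variable [Finite G.V] (hcyc : ∀ v k, 0 < k → optIter (G.F i) k v ≠ some v)
include hcyc

theorem le_h_iff {k : ℕ} {v : G.V} : k ≤ G.h i v ↔ (optIter (G.F i) k v).isSome :=
  Nat.le_sSup_iff_mem_of_isLowerSet (S := {k | (optIter (G.F i) k v).isSome = true}) ⟨0, rfl⟩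
    ⟨Nat.card G.V, fun _ hk => (lt_card_of_isSome_optIter hcyc hk).le⟩
    (fun _ _ hle hm => isSome_optIter_of_le hle hm)

theorem le_t_iff {k : ℕ} {v : G.V} : k ≤ G.t i v ↔ ∃ u, optIter (G.F i) k u = some v := by
  refine Nat.le_sSup_iff_mem_of_isLowerSet (S := {k | ∃ u, optIter (G.F i) k u = some v})
    ⟨0, v, rfl⟩
    ⟨Nat.card G.V, fun _ ⟨u, hu⟩ =>
      (lt_card_of_isSome_optIter hcyc (v := u) (by rw [hu]; rfl)).le⟩ ?_
  rintro a b hab ⟨u, hu⟩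
  obtain ⟨d, rfl⟩ := Nat.exists_eq_add_of_le' hab
  rw [optIter_add, Option.bind_eq_some_iff] at hu
  obtain ⟨x, -, hx⟩ := hu
  exact ⟨x, hx⟩

theorem isSome_F_iff_one_le_h {v : G.V} : (G.F i v).isSome ↔ 1 ≤ G.h i v := by
  rw [le_h_iff hcyc, optIter_one]

theorem exists_F_eq_iff_one_le_t {v : G.V} : (∃ u, G.F i u = some v) ↔ 1 ≤ G.t i v := by
  simp only [le_t_iff hcyc, optIter_one]

theorem h_eq_add_one_of_F {u w : G.V} (hw : G.F i u = some w) : G.h i u = G.h i w + 1 := by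
  have key : ∀ k, k ≤ G.h i w ↔ k + 1 ≤ G.h i u := fun k => by
    rw [le_h_iff hcyc, le_h_iff hcyc, optIter, hw, Option.bind_some]
  have := key (G.h i w)
  have := key (G.h i w + 1)
  omega

theorem t_eq_add_one_of_F (hinj : ∀ u u' w, G.F i u = some w → G.F i u' = some w → u = u')
    {u w : G.V} (hw : G.F i u = some w) : G.t i w = G.t i u + 1 := by
  have key : ∀ k, k ≤ G.t i u ↔ k + 1 ≤ G.t i w := fun k => by
    rw [le_t_iff hcyc, le_t_iff hcyc]
    constructor
    · rintro ⟨x, hx⟩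
      exact ⟨x, by rw [optIter_succ_eq_bind, hx, Option.bind_some, hw]⟩
    · rintro ⟨x, hx⟩
      rw [optIter_succ_eq_bind, Option.bind_eq_some_iff] at hx
      obtain ⟨y, hy, hyw⟩ := hx
      exact ⟨x, hinj _ _ _ hyw hw ▸ hy⟩
  have := key (G.t i u)
  have := key (G.t i u + 1)
  omega

end FiniteAcyclic

theorem h_eq_t_eq_of_conj {j : ℕ} {σ : G.V → G.V}
    (hij : ∀ u w, G.F i u = some w → G.F j (σ u) = some (σ w))
    (hji : ∀ u w, G.F j u = some w → G.F i (σ u) = some (σ w)) {v : G.V} (hv : σ v = v) :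
    G.h i v = G.h j v ∧ G.t i v = G.t j v := by
  have hmem_h : ∀ {a b : ℕ}, (∀ u w, G.F a u = some w → G.F b (σ u) = some (σ w)) → ∀ k,
      (optIter (G.F a) k v).isSome → (optIter (G.F b) k v).isSome := fun hab k hk => by
    obtain ⟨w, hw⟩ := Option.isSome_iff_exists.mp hk
    rw [← hv, optIter_conj hab hw]
    rfl
  have hmem_t : ∀ {a b : ℕ}, (∀ u w, G.F a u = some w → G.F b (σ u) = some (σ w)) → ∀ k,
      (∃ u, optIter (G.F a) k u = some v) → ∃ u, optIter (G.F b) k u = some v :=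
    fun hab k ⟨u, hu⟩ => ⟨σ u, hv ▸ optIter_conj hab hu⟩
  exact ⟨congrArg sSup (Set.ext fun k => ⟨hmem_h hij k, hmem_h hji k⟩),
    congrArg sSup (Set.ext fun k => ⟨hmem_t hij k, hmem_t hji k⟩)⟩

end PreGraph

theorem A2at.h_eq_t_eq_of_not_neighb {K : PreGraph} {i j : ℕ} (hA : A2at K j i)
    (hji : ¬Neighb j i) {x y : K.V} (h : K.F j x = some y) :
    K.h i x = K.h i y ∧ K.t i x = K.t i y := by
  obtain ⟨ht, hh, hd⟩ := hA.1 x y h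
  rw [if_neg hji] at hd
  omega

theorem A5at.exists_F_comm {K : PreGraph} {i j : ℕ} (hA : A5at K i j) {u x y : K.V}
    (hx : K.F i u = some x) (hy : K.F j u = some y) :
    ∃ w, K.F j x = some w ∧ K.F i y = some w := by
  obtain ⟨w, hw₁, hw₂⟩ := hA (K.F i) (Or.inl rfl) (K.F j) (Or.inl rfl) u
    (by simp [hx]) (by simp [hy])
  rw [hx, Option.bind_some] at hw₁
  rw [hy, Option.bind_some] at hw₂
  exact ⟨w, hw₁, hw₂⟩

theorem A5at.exists_F_comm_inv {K : PreGraph} {i j : ℕ} (hA : A5at K i j)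
    (hinj : ∀ c u u' w, K.F c u = some w → K.F c u' = some w → u = u') {w x y : K.V}
    (hx : K.F i x = some w) (hy : K.F j y = some w) :
    ∃ z, K.F j z = some x ∧ K.F i z = some y := by
  have hxinv := (PreGraph.Finv_eq_some_iff (hinj i)).2 hx
  have hyinv := (PreGraph.Finv_eq_some_iff (hinj j)).2 hy
  obtain ⟨z, hz₁, hz₂⟩ := hA (K.Finv i) (Or.inr rfl) (K.Finv j) (Or.inr rfl) w
    (by simp [hxinv]) (by simp [hyinv])
  rw [hxinv, Option.bind_some, PreGraph.Finv_eq_some_iff (hinj j)] at hz₁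
  rw [hyinv, Option.bind_some, PreGraph.Finv_eq_some_iff (hinj i)] at hz₂
  exact ⟨z, hz₁, hz₂⟩

theorem extract_F_eq_some_iff {K : PreGraph} {chain : ℕ → K.V → Option K.V} {σ : K.V → K.V}
    {i : ℕ} {u w : (extract K chain σ).V} :
    (extract K chain σ).F i u = some w ↔ chain i u.1 = some w.1 := by
  refine Option.pbind_eq_some_iff.trans ⟨?_, fun h => ⟨w.1, h, by rw [dif_pos w.2]; rfl⟩⟩
  rintro ⟨z, hz, hzw⟩
  split_ifs at hzw with hσz
  cases hzw
  exact hz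

section SymmetricExtract

variable {n : ℕ} {K : PreGraph} {σ : K.V → K.V}

theorem h_eq_t_eq_compl_of_fixed
    (hσ : ∀ (i : ℕ) (u v : K.V), K.F i u = some v ↔ K.F (2 * n - i) (σ u) = some (σ v))
    {i : ℕ} (hi : i ≤ 2 * n) {v : K.V} (hv : σ v = v) :
    K.h i v = K.h (2 * n - i) v ∧ K.t i v = K.t (2 * n - i) v := by
  refine PreGraph.h_eq_t_eq_of_conj (fun u w => (hσ i u w).1) (fun u w h => ?_) hv
  simpa only [Nat.sub_sub_self hi] using (hσ (2 * n - i) u w).1 h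

theorem chainB_self (hn : 1 ≤ n) (u : K.V) : chainB K n n u = K.F n u := by
  simp [chainB, hn]

theorem chainB_of_lt {i : ℕ} (hi : 1 ≤ i) (hin : i < n) (u : K.V) :
    chainB K n i u = (K.F i u).bind (K.F (2 * n - i)) := by
  rw [chainB, if_pos ⟨hi, hin.le⟩, if_neg hin.ne]

theorem chainB_injective (hinj : ∀ c u u' w, K.F c u = some w → K.F c u' = some w → u = u')
    {i : ℕ} {u u' w : K.V} (h : chainB K n i u = some w) (h' : chainB K n i u' = some w) :
    u = u' := by
  unfold chainB at h h'
  split_ifs at h h' with hi hin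
  · exact hinj n _ _ _ h h'
  · rw [Option.bind_eq_some_iff] at h h'
    obtain ⟨x, hx, hxw⟩ := h
    obtain ⟨x', hx', hxw'⟩ := h'
    obtain rfl := hinj (2 * n - i) _ _ _ hxw hxw'
    exact hinj i _ _ _ hx hx'

variable (hK : IsACrystal (2 * n - 1) K)
include hK

/-- For `i < n` the second step of an `ibar`-edge has color `2n - i`, which is far from `i`,
so by (A2) it changes neither `h_i` nor `t_i`. -/
theorem h_t_of_chainB {i : ℕ} (hi : 1 ≤ i) (hin : i ≤ n) {u w : K.V}
    (h : chainB K n i u = some w) : K.h i u = K.h i w + 1 ∧ K.t i w = K.t i u + 1 := by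
  have : Finite K.V := hK.1.1
  have hstep : ∀ {x y}, K.F i x = some y → K.h i x = K.h i y + 1 ∧ K.t i y = K.t i x + 1 :=
    fun hxy => ⟨PreGraph.h_eq_add_one_of_F (hK.1.2.2.2 i) hxy,
      PreGraph.t_eq_add_one_of_F (hK.1.2.2.2 i) (hK.1.2.2.1 i) hxy⟩
  rcases hin.eq_or_lt with rfl | hlt
  · rw [chainB_self hi] at h
    exact hstep h
  · rw [chainB_of_lt hi hlt, Option.bind_eq_some_iff] at h
    obtain ⟨x, hx, hxw⟩ := h
    have hA2 := hK.2.2.1 (2 * n - i) ⟨by omega, by omega⟩ i ⟨hi, by omega⟩ (by omega)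
    have hfar := hA2.h_eq_t_eq_of_not_neighb (by unfold Neighb; omega) hxw
    have := hstep hx
    omega

variable (hσ : ∀ (i : ℕ) (u v : K.V), K.F i u = some v ↔ K.F (2 * n - i) (σ u) = some (σ v))
include hσ

theorem exists_chainB_eq_of_one_le_h {i : ℕ} (hi : 1 ≤ i) (hin : i ≤ n) {u : K.V}
    (hu : σ u = u) (hh : 1 ≤ K.h i u) : ∃ w, σ w = w ∧ chainB K n i u = some w := by
  have : Finite K.V := hK.1.1
  obtain ⟨x, hx⟩ :=
    Option.isSome_iff_exists.mp ((PreGraph.isSome_F_iff_one_le_h (hK.1.2.2.2 i)).2 hh)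
  have hσx : K.F (2 * n - i) u = some (σ x) := by
    have := (hσ i u x).1 hx
    rwa [hu] at this
  rcases hin.eq_or_lt with rfl | hlt
  · rw [show 2 * i - i = i by omega, hx] at hσx
    exact ⟨x, (Option.some_inj.mp hσx).symm, by rw [chainB_self hi, hx]⟩
  · have hA5 :=
      hK.2.2.2.2 i ⟨hi, by omega⟩ (2 * n - i) ⟨by omega, by omega⟩ (Or.inl (by omega))
    obtain ⟨w, hxw, hσxw⟩ := hA5.exists_F_comm hx hσx
    have hσw : K.F i (σ x) = some (σ w) := by
      simpa only [Nat.sub_sub_self (by omega : i ≤ 2 * n)] using (hσ (2 * n - i) x w).1 hxw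
    exact ⟨w, Option.some_inj.mp (hσw.symm.trans hσxw),
      by rw [chainB_of_lt hi hlt, hx, Option.bind_some, hxw]⟩

theorem exists_chainB_eq_of_one_le_t {i : ℕ} (hi : 1 ≤ i) (hin : i ≤ n) {w : K.V}
    (hw : σ w = w) (ht : 1 ≤ K.t i w) : ∃ u, σ u = u ∧ chainB K n i u = some w := by
  have : Finite K.V := hK.1.1
  have hinj := hK.1.2.2.1
  obtain ⟨y, hy⟩ := (PreGraph.exists_F_eq_iff_one_le_t (hK.1.2.2.2 i)).2 ht
  have hσy : K.F (2 * n - i) (σ y) = some w := by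
    have := (hσ i y w).1 hy
    rwa [hw] at this
  rcases hin.eq_or_lt with rfl | hlt
  · rw [show 2 * i - i = i by omega] at hσy
    exact ⟨y, hinj i _ _ _ hσy hy, by rw [chainB_self hi, hy]⟩
  · have hA5 :=
      hK.2.2.2.2 i ⟨hi, by omega⟩ (2 * n - i) ⟨by omega, by omega⟩ (Or.inl (by omega))
    obtain ⟨z, hzy, hzσy⟩ := hA5.exists_F_comm_inv hinj hy hσy
    have hσz : K.F i (σ z) = some (σ y) := by
      simpa only [Nat.sub_sub_self (by omega : i ≤ 2 * n)] using (hσ (2 * n - i) z y).1 hzy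
    exact ⟨z, hinj i _ _ _ hσz hzσy, by rw [chainB_of_lt hi hlt, hzσy, Option.bind_some, hσy]⟩

end SymmetricExtract

theorem extract_monochromatic_paths_general
    (n : ℕ) (K : PreGraph) (hK : IsACrystal (2 * n - 1) K)
    (σ : K.V → K.V)
    (hσ : ∀ (i : ℕ) (u v : K.V), K.F i u = some v ↔ K.F (2 * n - i) (σ u) = some (σ v))
    (v : K.V) (hv : σ v = v) :
    (∀ i, 1 ≤ i → i ≤ 2 * n - 1 →
      K.h i v = K.h (2 * n - i) v ∧ K.t i v = K.t (2 * n - i) v) ∧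
    (∀ i, 1 ≤ i → i ≤ n →
      (∀ u u' w : (extractB K n σ).V,
        (extractB K n σ).F i u = some w → (extractB K n σ).F i u' = some w → u = u') ∧
      (∀ (u : (extractB K n σ).V) (k : ℕ), 0 < k →
        optIter ((extractB K n σ).F i) k u ≠ some u) ∧
      (extractB K n σ).h i ⟨v, hv⟩ = K.h i v ∧
      (extractB K n σ).t i ⟨v, hv⟩ = K.t i v) := by
  refine ⟨fun i _ hi => h_eq_t_eq_compl_of_fixed hσ (by omega) hv, fun i hi hin => ?_⟩
  have hstep : ∀ u w : (extractB K n σ).V, (extractB K n σ).F i u = some w →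
      K.h i u.1 = K.h i w.1 + 1 ∧ K.t i w.1 = K.t i u.1 + 1 :=
    fun u w h => h_t_of_chainB hK hi hin (extract_F_eq_some_iff.1 h)
  refine ⟨fun u u' w h h' => Subtype.ext <| chainB_injective hK.1.2.2.1
      (extract_F_eq_some_iff.1 h) (extract_F_eq_some_iff.1 h'), fun u k hk h => ?_,
    PreGraph.h_eq_of_potential _ (fun u w h => (hstep u w h).1) (fun u hu => ?_) _,
    PreGraph.t_eq_of_potential _ (fun u w h => (hstep u w h).2) (fun w hw => ?_) _⟩
  · have := optIter_potential (fun x => (K.h i x.1 : ℤ)) (-1)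
      (fun u w h => by have := (hstep u w h).1; omega) h
    omega
  · obtain ⟨w, hw, hchain⟩ := exists_chainB_eq_of_one_le_h hK hσ hi hin u.2 hu
    exact Option.isSome_iff_exists.2 ⟨⟨w, hw⟩, extract_F_eq_some_iff.2 hchain⟩
  · obtain ⟨u, hu, hchain⟩ := exists_chainB_eq_of_one_le_t hK hσ hi hin w.2 hw
    exact ⟨⟨u, hu⟩, extract_F_eq_some_iff.2 hchain⟩

/-- for a self-complementary vertex `v` of a symmetric `A_{2n-1}`-crystal:
(a) `h_i(v) = h_{i'}(v)` and `t_i(v) = t_{i'}(v)` for complementary colors `i, i' = 2n-i`;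
(b) each color class of the symmetric extract `B` satisfies (A1), and the maximal
`ibar`-paths of `B` through `v` have lengths `h_i(v)` and `t_i(v)`. -/
theorem extract_monochromatic_paths
    (n : ℕ) (hn : 2 ≤ n) (K : PreGraph) (hK : IsACrystal (2 * n - 1) K)
    (s : K.V) (hs : IsSource K s)
    (c : ℕ → ℕ) (hc : ∀ i, 1 ≤ i → i ≤ 2 * n - 1 → K.h i s = c i)
    (hsym : ∀ i, 1 ≤ i → i ≤ 2 * n - 1 → c i = c (2 * n - i))
    (σ : K.V → K.V) (hσb : Function.Bijective σ)
    (hσ : ∀ (i : ℕ) (u v : K.V), K.F i u = some v ↔ K.F (2 * n - i) (σ u) = some (σ v))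
    (v : K.V) (hv : σ v = v) :
    (∀ i, 1 ≤ i → i ≤ 2 * n - 1 →
      K.h i v = K.h (2 * n - i) v ∧ K.t i v = K.t (2 * n - i) v) ∧
    (∀ i, 1 ≤ i → i ≤ n →
      (∀ u u' w : (extractB K n σ).V,
        (extractB K n σ).F i u = some w → (extractB K n σ).F i u' = some w → u = u') ∧
      (∀ (u : (extractB K n σ).V) (k : ℕ), 0 < k →
        optIter ((extractB K n σ).F i) k u ≠ some u) ∧
      (extractB K n σ).h i ⟨v, hv⟩ = K.h i v ∧
      (extractB K n σ).t i ⟨v, hv⟩ = K.t i v) :=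
  extract_monochromatic_paths_general n K hK σ hσ v hv
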